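/- Let n be an even nonnegative integer, n = 2p, and let V = ℂ^{n+1} with basis v₀, …, v_n. Define linear operators on V by: X⁺v_{2j} = [n−2j+1]_q v_{2j−1}, X⁺v_{2j+1} = [n−2j]_{qt} v_{2j}, X⁻v_{2j} = [2j+1]_q v_{2j+1}, X⁻v_{2j+1} = [2j+2]_{qt} v_{2j+2} (with v_{−1} = v_{n+1} = 0), K v_j = q^{n−2j} v_j, K̃ v_j = t^{p−j} v_j, where q, t are nonzero complex numbers with q, qt not roots of unity and [m]_x = (x^m − x^{−m})/(x − x^{−1}). Then for all 0 ≤ j ≤ p the following operator identities hold on basis vectors: (q − q⁻¹)(qt − (qt)⁻¹) X⁺X⁻ v_{2j} = (q^{n+1}t^{n−2j} + q^{−n−1}t^{2j−n} − q^{n−4j−1}t^{n−2j} − q^{4j+1−n}t^{2j−n}) v_{2j}, and (q − q⁻¹)(qt − (qt)⁻¹) X⁻X⁺ v_{2j} = (q^{n+1}t^{2j} + q^{−n−1}t^{−2j} − q^{n+1−4j}t^{−2j} − q^{4j−n−1}t^{2j}) v_{2j}. -/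
import Mathlib


/-- The quantum integer [m]_x = (x^m − x^{−m})/(x − x⁻¹). -/
noncomputable def qint (x : ℂ) (m : ℤ) : ℂ := (x ^ m - x ^ (-m)) / (x - x⁻¹)

private lemma expand_aux (q t : ℂ) (hq : q ≠ 0) (a b : ℤ) :
    (q ^ a - q ^ (-a)) * ((q * t) ^ b - (q * t) ^ (-b)) =
      q ^ (a + b) * t ^ b + q ^ (-a - b) * t ^ (-b)
        - q ^ (b - a) * t ^ b - q ^ (a - b) * t ^ (-b) := by
  have e : ∀ x y : ℤ, q ^ x * (q * t) ^ y = q ^ (x + y) * t ^ y := fun x y => by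
    rw [mul_zpow, ← mul_assoc, ← zpow_add₀ hq]
  rw [sub_mul, mul_sub, mul_sub, e, e, e, e,
    show -a + b = b - a from by ring, show a + -b = a - b from by ring,
    show -a + -b = -a - b from by ring]
  ring

private lemma sub_inv_ne_zero (x : ℂ) (hx : x ≠ 0) (h2 : x ^ (2 : ℕ) ≠ 1) :
    x - x⁻¹ ≠ 0 := by
  intro h
  apply h2
  have hx2 : x = x⁻¹ := sub_eq_zero.mp h
  calc x ^ (2 : ℕ) = x * x := sq x
    _ = x * x⁻¹ := by rw [← hx2]
    _ = 1 := mul_inv_cancel₀ hx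

private lemma qint_mul (q t : ℂ) (hq : q ≠ 0) (ht : t ≠ 0)
    (h2 : q ^ (2 : ℕ) ≠ 1) (h2' : (q * t) ^ (2 : ℕ) ≠ 1) (a b : ℤ) :
    ((q - q⁻¹) * (q * t - (q * t)⁻¹)) * (qint q a * qint (q * t) b) =
      q ^ (a + b) * t ^ b + q ^ (-a - b) * t ^ (-b)
        - q ^ (b - a) * t ^ b - q ^ (a - b) * t ^ (-b) := by
  have hqt : q * t ≠ 0 := mul_ne_zero hq ht
  have hd1 : q - q⁻¹ ≠ 0 := sub_inv_ne_zero q hq h2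
  have hd2 : q * t - (q * t)⁻¹ ≠ 0 := sub_inv_ne_zero (q * t) hqt h2'
  rw [← expand_aux q t hq a b]
  unfold qint
  calc ((q - q⁻¹) * (q * t - (q * t)⁻¹)) *
        ((q ^ a - q ^ (-a)) / (q - q⁻¹) * (((q * t) ^ b - (q * t) ^ (-b)) / (q * t - (q * t)⁻¹)))
      = ((q ^ a - q ^ (-a)) / (q - q⁻¹) * (q - q⁻¹)) *
        (((q * t) ^ b - (q * t) ^ (-b)) / (q * t - (q * t)⁻¹) * (q * t - (q * t)⁻¹)) := by ring
    _ = (q ^ a - q ^ (-a)) * ((q * t) ^ b - (q * t) ^ (-b)) := by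
        rw [div_mul_cancel₀ _ hd1, div_mul_cancel₀ _ hd2]

/-- Verification that the t-deformed operators on V_n = ℂ^{n+1} (n = 2p) satisfy the defining
relation of the interpolating quantum group 𝒰_{q,t}(B₁) on the even basis vectors v_{2j}. -/
theorem interpolating_B1_representation (p : ℕ) (n : ℤ) (hn : n = 2 * p)
    (q t : ℂ) (hq : q ≠ 0) (ht : t ≠ 0)
    (hroot : ∀ k : ℕ, 0 < k → q ^ k ≠ 1 ∧ (q * t) ^ k ≠ 1)
    (v : ℤ → (Fin (2 * p + 1) → ℂ))
    (hv : ∀ k : ℤ, (hk : 0 ≤ k ∧ k ≤ n) → v k = Pi.single ⟨k.toNat, by omega⟩ 1)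
    (hv0 : ∀ k : ℤ, k < 0 ∨ n < k → v k = 0)
    (Xp Xm K Kt : (Fin (2 * p + 1) → ℂ) →ₗ[ℂ] (Fin (2 * p + 1) → ℂ))
    (hXp_even : ∀ j : ℤ, 0 ≤ 2 * j → 2 * j ≤ n →
      Xp (v (2 * j)) = qint q (n - 2 * j + 1) • v (2 * j - 1))
    (hXp_odd : ∀ j : ℤ, 0 ≤ 2 * j + 1 → 2 * j + 1 ≤ n →
      Xp (v (2 * j + 1)) = qint (q * t) (n - 2 * j) • v (2 * j))
    (hXm_even : ∀ j : ℤ, 0 ≤ 2 * j → 2 * j ≤ n →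
      Xm (v (2 * j)) = qint q (2 * j + 1) • v (2 * j + 1))
    (hXm_odd : ∀ j : ℤ, 0 ≤ 2 * j + 1 → 2 * j + 1 ≤ n →
      Xm (v (2 * j + 1)) = qint (q * t) (2 * j + 2) • v (2 * j + 2))
    (hK : ∀ j : ℤ, 0 ≤ j → j ≤ n → K (v j) = q ^ (n - 2 * j) • v j)
    (hKt : ∀ j : ℤ, 0 ≤ j → j ≤ n → Kt (v j) = t ^ ((p : ℤ) - j) • v j) :
    ∀ j : ℤ, 0 ≤ j → j ≤ (p : ℤ) →
      (((q - q⁻¹) * (q * t - (q * t)⁻¹)) • Xp (Xm (v (2 * j))) =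
        (q ^ (n + 1) * t ^ (n - 2 * j) + q ^ (-n - 1) * t ^ (2 * j - n)
          - q ^ (n - 4 * j - 1) * t ^ (n - 2 * j)
          - q ^ (4 * j + 1 - n) * t ^ (2 * j - n)) • v (2 * j)) ∧
      (((q - q⁻¹) * (q * t - (q * t)⁻¹)) • Xm (Xp (v (2 * j))) =
        (q ^ (n + 1) * t ^ (2 * j) + q ^ (-n - 1) * t ^ (-2 * j)
          - q ^ (n + 1 - 4 * j) * t ^ (-2 * j)
          - q ^ (4 * j - n - 1) * t ^ (2 * j)) • v (2 * j)) := by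
  have h2 : q ^ (2 : ℕ) ≠ 1 := (hroot 2 (by norm_num)).1
  have h2' : (q * t) ^ (2 : ℕ) ≠ 1 := (hroot 2 (by norm_num)).2
  intro j hj0 hjp
  constructor
  · -- X⁺X⁻
    rw [hXm_even j (by omega) (by omega), map_smul]
    rcases lt_or_eq_of_le hjp with hlt | heq
    · rw [hXp_odd j (by omega) (by omega), smul_smul, smul_smul]
      congr 1
      rw [mul_assoc, qint_mul q t hq ht h2 h2' (2 * j + 1) (n - 2 * j),
        show 2 * j + 1 + (n - 2 * j) = n + 1 from by ring,
        show -(2 * j + 1) - (n - 2 * j) = -n - 1 from by ring,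
        show n - 2 * j - (2 * j + 1) = n - 4 * j - 1 from by ring,
        show 2 * j + 1 - (n - 2 * j) = 4 * j + 1 - n from by ring,
        show -(n - 2 * j) = 2 * j - n from by ring]
    · rw [hv0 (2 * j + 1) (Or.inr (by omega)), map_zero, smul_zero, smul_zero,
        show n - 2 * j = 0 from by omega, show 2 * j - n = 0 from by omega,
        show n - 4 * j - 1 = -n - 1 from by omega,
        show 4 * j + 1 - n = n + 1 from by omega]
      rw [show q ^ (n + 1) * t ^ (0 : ℤ) + q ^ (-n - 1) * t ^ (0 : ℤ)
          - q ^ (-n - 1) * t ^ (0 : ℤ) - q ^ (n + 1) * t ^ (0 : ℤ) = 0 from by ring,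
        zero_smul]
  · -- X⁻X⁺
    rw [hXp_even j (by omega) (by omega), map_smul]
    rcases lt_or_eq_of_le hj0 with hlt | heq
    · have hodd := hXm_odd (j - 1) (by omega) (by omega)
      rw [show 2 * (j - 1) + 1 = 2 * j - 1 from by ring,
        show 2 * (j - 1) + 2 = 2 * j from by ring] at hodd
      rw [hodd, smul_smul, smul_smul]
      congr 1
      rw [mul_assoc, qint_mul q t hq ht h2 h2' (n - 2 * j + 1) (2 * j),
        show n - 2 * j + 1 + 2 * j = n + 1 from by ring,
        show -(n - 2 * j + 1) - 2 * j = -n - 1 from by ring,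
        show 2 * j - (n - 2 * j + 1) = 4 * j - n - 1 from by ring,
        show n - 2 * j + 1 - 2 * j = n + 1 - 4 * j from by ring,
        show -(2 * j) = -2 * j from by ring]
      ring
    · rw [hv0 (2 * j - 1) (Or.inl (by omega)), map_zero, smul_zero, smul_zero,
        show 2 * j = 0 from by omega, show -2 * j = 0 from by omega,
        show n + 1 - 4 * j = n + 1 from by omega,
        show 4 * j - n - 1 = -n - 1 from by omega]
      rw [show q ^ (n + 1) * t ^ (0 : ℤ) + q ^ (-n - 1) * t ^ (0 : ℤ)
          - q ^ (n + 1) * t ^ (0 : ℤ) - q ^ (-n - 1) * t ^ (0 : ℤ) = 0 from by ring,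
        zero_smul]
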